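/- arXiv:2401.04594 — 3 statements merged into one kernel-verified Lean document; each statement's English description precedes it below -/
import Mathlib

section
/- Unrolling of iteration: for every program C, expressions e, e′ and state σ, the iteration semantics satisfies ⟦iter(C,e,e′)⟧(σ) = ∑_{n∈ℕ} ⟦(assume e; C)ⁿ ; assume e′⟧(σ), where D⁰ = skip and D^{n+1} = Dⁿ ; D, and the infinite sum is taken in W(Σ) (pointwise, as the supremum of finite partial sums). -/
open scoped Classical

universe u v

/-- A semiring that is simultaneously a complete lattice with bottom `0`, whose order
coincides with the natural (additive) order, and in which addition and multiplication
are Scott-continuous. -/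
class OLSemiring (U : Type u) extends Semiring U, CompleteLattice U where
  bot_eq_zero : (⊥ : U) = 0
  le_iff_exists_add : ∀ a b : U, a ≤ b ↔ ∃ c, a + c = b
  add_scott : ∀ (D : Set U), D.Nonempty → DirectedOn (· ≤ ·) D → ∀ y : U,
    sSup ((fun x => x + y) '' D) = sSup D + y
  mul_scott_right : ∀ (D : Set U), D.Nonempty → DirectedOn (· ≤ ·) D → ∀ y : U,
    sSup ((fun x => x * y) '' D) = sSup D * y
  mul_scott_left : ∀ (D : Set U), D.Nonempty → DirectedOn (· ≤ ·) D → ∀ y : U,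
    sSup ((fun x => y * x) '' D) = y * sSup D

variable {U : Type u} [OLSemiring U]

/-- Infinite sum: supremum over finite subfamilies of finite sums. -/
noncomputable def wsum {I : Type v} (f : I → U) : U :=
  ⨆ J : Finset I, ∑ i ∈ J, f i

/-- The unit of the weighting monad. -/
noncomputable def eta {X : Type u} (x : X) : X → U :=
  fun y => if y = x then 1 else 0

/-- Kleisli extension: `kext f m y = ∑_{x ∈ supp m} m x * f x y`. -/
noncomputable def kext {X Y : Type u} (f : X → Y → U) (m : X → U) : Y → U :=
  fun y => wsum (fun x : Function.support m => m x.1 * f x.1 y)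

/-- Syntax of tests over primitive tests indexed by `TI`. -/
inductive TestExpr (TI : Type u) : Type u where
  | prim (t : TI)
  | tt
  | ff
  | and (b₁ b₂ : TestExpr TI)
  | or (b₁ b₂ : TestExpr TI)
  | not (b : TestExpr TI)

/-- The set of states at which a test is true. -/
def testSet {St TI : Type u} (tsem : TI → Set St) : TestExpr TI → Set St
  | .prim t => tsem t
  | .tt => Set.univ
  | .ff => ∅
  | .and b₁ b₂ => testSet tsem b₁ ∩ testSet tsem b₂
  | .or b₁ b₂ => testSet tsem b₁ ∪ testSet tsem b₂
  | .not b => (testSet tsem b)ᶜ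

/-- Expressions: a test or a weight. -/
inductive Expr (U : Type u) (TI : Type u) : Type u where
  | test (b : TestExpr TI)
  | wt (u : U)

/-- Evaluation of expressions into weights. -/
noncomputable def eeval {St TI : Type u} (tsem : TI → Set St) : Expr U TI → St → U
  | .test b => fun σ => if σ ∈ testSet tsem b then 1 else 0
  | .wt u => fun _ => u

/-- Programs. -/
inductive Prog (U St TI Act : Type u) : Type u where
  | skip
  | seq (C₁ C₂ : Prog U St TI Act)
  | choice (C₁ C₂ : Prog U St TI Act)
  | assume (e : Expr U TI)
  | iter (C : Prog U St TI Act) (e e' : Expr U TI)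
  | act (a : Act)

/-- The characteristic function of iteration. -/
noncomputable def Phi {St : Type u} (w w' : St → U) (g : St → St → U)
    (f : St → St → U) : St → St → U :=
  fun σ τ => w σ * kext f (g σ) τ + w' σ * eta σ τ

/-- Denotational semantics of programs. -/
noncomputable def sem {St TI Act : Type u} (tsem : TI → Set St)
    (asem : Act → St → St → U) : Prog U St TI Act → St → St → U
  | .skip => fun σ => eta σ
  | .seq C₁ C₂ => fun σ => kext (sem tsem asem C₂) (sem tsem asem C₁ σ)
  | .choice C₁ C₂ => fun σ τ => sem tsem asem C₁ σ τ + sem tsem asem C₂ σ τ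
  | .assume e => fun σ τ => eeval tsem e σ * eta σ τ
  | .iter C e e' =>
      ⨆ n : ℕ, (Phi (eeval tsem e) (eeval tsem e') (sem tsem asem C))^[n] (fun _ _ => 0)
  | .act a => asem a

/-- Outcome assertions. -/
abbrev OA (U : Type u) (St : Type u) := Set (St → U)

/-- Binary outcome conjunction. -/
def oplus {St : Type u} (φ ψ : OA U St) : OA U St :=
  { m | ∃ m₁ ∈ φ, ∃ m₂ ∈ ψ, m = fun σ => m₁ σ + m₂ σ }

/-- Indexed outcome conjunction. -/
noncomputable def bigOplus {St T : Type u} (φ : T → OA U St) : OA U St :=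
  { m | ∃ f : T → St → U, (∀ t, f t ∈ φ t) ∧ m = fun σ => wsum (fun t => f t σ) }

/-- Right scaling of an assertion by a weight. -/
def odotR {St : Type u} (φ : OA U St) (u : U) : OA U St :=
  { m' | ∃ m ∈ φ, m' = fun σ => m σ * u }

/-- Left scaling of an assertion by a weight. -/
def odotL {St : Type u} (u : U) (φ : OA U St) : OA U St :=
  { m' | ∃ m ∈ φ, m' = fun σ => u * m σ }

/-- `φ ⊨ e = u` : the expression `e` evaluates to `u` on the support of every `m ∈ φ`. -/
def entailsEq {St TI : Type u} (tsem : TI → Set St) (φ : OA U St)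
    (e : Expr U TI) (u : U) : Prop :=
  ∀ m ∈ φ, ∀ σ, m σ ≠ 0 → eeval tsem e σ = u

/-- Semantic validity of an outcome triple. -/
def valid {St TI Act : Type u} (tsem : TI → Set St) (asem : Act → St → St → U)
    (φ : OA U St) (C : Prog U St TI Act) (ψ : OA U St) : Prop :=
  ∀ m ∈ φ, kext (sem tsem asem C) m ∈ ψ

/-- The family `ψ` of assertions converges to `ψlim`. -/
def convergesTo {St : Type u} (ψ : ℕ → OA U St) (ψlim : OA U St) : Prop :=
  ∀ ms : ℕ → St → U, (∀ n, ms n ∈ ψ n) → (fun σ => wsum (fun n => ms n σ)) ∈ ψlim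

/-- The Outcome Logic proof system (with oracle axioms for valid atomic triples). -/
inductive Deriv {St TI Act : Type u} (tsem : TI → Set St) (asem : Act → St → St → U) :
    OA U St → Prog U St TI Act → OA U St → Prop where
  | atom {φ ψ} (a : Act) :
      valid tsem asem φ (.act a) ψ → Deriv tsem asem φ (.act a) ψ
  | skip (φ) : Deriv tsem asem φ .skip φ
  | seq {φ ϑ ψ C₁ C₂} :
      Deriv tsem asem φ C₁ ϑ → Deriv tsem asem ϑ C₂ ψ →
      Deriv tsem asem φ (.seq C₁ C₂) ψ
  | plus {φ ψ₁ ψ₂ C₁ C₂} :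
      Deriv tsem asem φ C₁ ψ₁ → Deriv tsem asem φ C₂ ψ₂ →
      Deriv tsem asem φ (.choice C₁ C₂) (oplus ψ₁ ψ₂)
  | assume {φ e u} :
      entailsEq tsem φ e u → Deriv tsem asem φ (.assume e) (odotR φ u)
  | iter {C e e'} (φn ψn : ℕ → OA U St) (ψlim : OA U St) :
      convergesTo ψn ψlim →
      (∀ n, Deriv tsem asem (φn n) (.seq (.assume e) C) (φn (n + 1))) →
      (∀ n, Deriv tsem asem (φn n) (.assume e') (ψn n)) →
      Deriv tsem asem (φn 0) (.iter C e e') ψlim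
  | false (C φ) : Deriv tsem asem ∅ C φ
  | true (C φ) : Deriv tsem asem φ C Set.univ
  | scale {φ ψ C} (u : U) :
      Deriv tsem asem φ C ψ → Deriv tsem asem (odotL u φ) C (odotL u ψ)
  | disj {φ₁ φ₂ ψ₁ ψ₂ C} :
      Deriv tsem asem φ₁ C ψ₁ → Deriv tsem asem φ₂ C ψ₂ →
      Deriv tsem asem (φ₁ ∪ φ₂) C (ψ₁ ∪ ψ₂)
  | conj {φ₁ φ₂ ψ₁ ψ₂ C} :
      Deriv tsem asem φ₁ C ψ₁ → Deriv tsem asem φ₂ C ψ₂ →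
      Deriv tsem asem (φ₁ ∩ φ₂) C (ψ₁ ∩ ψ₂)
  | choice {T : Type u} {C} (φ φ' : T → OA U St) :
      (∀ t, Deriv tsem asem (φ t) C (φ' t)) →
      Deriv tsem asem (bigOplus φ) C (bigOplus φ')
  | exists_ {T : Type u} {C} (φ φ' : T → OA U St) :
      (∀ t, Deriv tsem asem (φ t) C (φ' t)) →
      Deriv tsem asem (⋃ t, φ t) C (⋃ t, φ' t)
  | conseq {φ φ' ψ ψ' C} :
      φ' ⊆ φ → Deriv tsem asem φ C ψ → ψ ⊆ ψ' →
      Deriv tsem asem φ' C ψ'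

/-- `ppow C n` is the `n`-fold sequential composition `Cⁿ` (`C⁰ = skip`, `C^{n+1} = Cⁿ;C`). -/
def ppow {U St TI Act : Type u} (C : Prog U St TI Act) : ℕ → Prog U St TI Act
  | 0 => .skip
  | n + 1 => .seq (ppow C n) C

/-!
The `n`-th Kleene approximant `Φⁿ(0)` of the loop is the partial sum
`∑_{k<n} ⟦(assume e; C)ᵏ; assume e′⟧`: applying `Φ` once more prepends one round of
`assume e; C`, and associativity of Kleisli extension turns the `k`-th term into the
`(k+1)`-st. Associativity is Fubini for `wsum`, which holds because Scott continuity lets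
infinite sums be pulled out of products and out of finite sums. Finally, the supremum of the
partial sums over initial segments `range n` is the full sum, since every finite set of
indices lies in some initial segment.
-/

namespace OLSemiring

variable {U : Type u} [OLSemiring U]

instance (priority := 100) toCanonicallyOrderedAdd : CanonicallyOrderedAdd U where
  exists_add_of_le h := by
    obtain ⟨c, hc⟩ := (le_iff_exists_add _ _).1 h
    exact ⟨c, hc.symm⟩
  le_add_self a b := (le_iff_exists_add _ _).2 ⟨b, add_comm _ _⟩
  le_self_add a b := (le_iff_exists_add _ _).2 ⟨b, rfl⟩

instance (priority := 100) toIsOrderedAddMonoid : IsOrderedAddMonoid U :=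
  CanonicallyOrderedAdd.toIsOrderedAddMonoid

section Directed

variable {ι : Type*} [Nonempty ι] {g : ι → U}

theorem iSup_add_of_directed (hg : Directed (· ≤ ·) g) (y : U) :
    (⨆ i, g i) + y = ⨆ i, (g i + y) := by
  have h := add_scott (Set.range g) (Set.range_nonempty g) (directedOn_range.2 hg) y
  rw [← Set.range_comp] at h
  exact h.symm

theorem add_iSup_of_directed (hg : Directed (· ≤ ·) g) (y : U) :
    y + (⨆ i, g i) = ⨆ i, (y + g i) := by
  simp only [add_comm y, iSup_add_of_directed hg]

theorem iSup_mul_of_directed (hg : Directed (· ≤ ·) g) (y : U) :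
    (⨆ i, g i) * y = ⨆ i, (g i * y) := by
  have h := mul_scott_right (Set.range g) (Set.range_nonempty g) (directedOn_range.2 hg) y
  rw [← Set.range_comp] at h
  exact h.symm

theorem mul_iSup_of_directed (hg : Directed (· ≤ ·) g) (y : U) :
    y * (⨆ i, g i) = ⨆ i, (y * g i) := by
  have h := mul_scott_left (Set.range g) (Set.range_nonempty g) (directedOn_range.2 hg) y
  rw [← Set.range_comp] at h
  exact h.symm

end Directed

end OLSemiring

open OLSemiring

section wsum

variable {U : Type u} [OLSemiring U] {I : Type v}

theorem directed_finsetSum (f : I → U) :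
    Directed (· ≤ ·) (fun J : Finset I => ∑ i ∈ J, f i) :=
  Monotone.directed_le fun _ _ => Finset.sum_le_sum_of_subset

theorem sum_le_wsum (f : I → U) (J : Finset I) : ∑ i ∈ J, f i ≤ wsum f :=
  le_iSup (fun J : Finset I => ∑ i ∈ J, f i) J

theorem wsum_mono {f g : I → U} (h : ∀ i, f i ≤ g i) : wsum f ≤ wsum g :=
  iSup_mono fun _ => Finset.sum_le_sum fun i _ => h i

theorem wsum_mul (f : I → U) (u : U) : wsum f * u = wsum (fun i => f i * u) := by
  simp only [wsum, iSup_mul_of_directed (directed_finsetSum f), Finset.sum_mul]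

theorem mul_wsum (f : I → U) (u : U) : u * wsum f = wsum (fun i => u * f i) := by
  simp only [wsum, mul_iSup_of_directed (directed_finsetSum f), Finset.mul_sum]

theorem wsum_add (f g : I → U) : wsum (fun i => f i + g i) = wsum f + wsum g := by
  refine le_antisymm (iSup_le fun J => ?_) ?_
  · rw [Finset.sum_add_distrib]
    exact add_le_add (sum_le_wsum f J) (sum_le_wsum g J)
  · simp only [wsum, iSup_add_of_directed (directed_finsetSum f),
      add_iSup_of_directed (directed_finsetSum g)]
    refine iSup_le fun J => iSup_le fun K => ?_
    calc (∑ i ∈ J, f i) + ∑ i ∈ K, g i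
        ≤ (∑ i ∈ J ∪ K, f i) + ∑ i ∈ J ∪ K, g i :=
          add_le_add (Finset.sum_le_sum_of_subset Finset.subset_union_left)
            (Finset.sum_le_sum_of_subset Finset.subset_union_right)
      _ = ∑ i ∈ J ∪ K, (f i + g i) := Finset.sum_add_distrib.symm
      _ ≤ _ := sum_le_wsum _ _

theorem finsetSum_wsum {K : Type*} (s : Finset K) (f : K → I → U) :
    ∑ k ∈ s, wsum (f k) = wsum (fun i => ∑ k ∈ s, f k i) := by
  induction s using Finset.cons_induction with
  | empty => exact (le_antisymm (iSup_le fun _ => by simp) zero_le).symm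
  | cons k s hk ih => simp only [Finset.sum_cons, ih, wsum_add]

theorem wsum_comm_le {J : Type v} (h : I → J → U) :
    wsum (fun i => wsum (fun j => h i j)) ≤ wsum (fun j => wsum (fun i => h i j)) :=
  iSup_le fun s => (finsetSum_wsum s h).le.trans (wsum_mono fun _ => sum_le_wsum _ s)

theorem wsum_comm {J : Type v} (h : I → J → U) :
    wsum (fun i => wsum (fun j => h i j)) = wsum (fun j => wsum (fun i => h i j)) :=
  le_antisymm (wsum_comm_le h) (wsum_comm_le fun j i => h i j)

theorem wsum_eq_single {f : I → U} (a : I) (hf : ∀ i ≠ a, f i = 0) : wsum f = f a := by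
  classical
  refine le_antisymm (iSup_le fun J => ?_) ?_
  · calc ∑ i ∈ J, f i ≤ ∑ i ∈ insert a J, f i :=
          Finset.sum_le_sum_of_subset (Finset.subset_insert a J)
      _ = f a := Finset.sum_eq_single_of_mem a (Finset.mem_insert_self a J) fun i _ => hf i
  · simpa using sum_le_wsum f {a}

theorem wsum_subtype_of_support_subset {S : Set I} {f : I → U} (hf : Function.support f ⊆ S) :
    wsum (fun i : S => f i) = wsum f := by
  classical
  refine le_antisymm (iSup_le fun J => ?_) (iSup_le fun J => ?_)
  · simpa [Finset.sum_map] using sum_le_wsum f (J.map (Function.Embedding.subtype _))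
  · rw [← Finset.sum_filter_of_ne fun i _ hi => hf hi, ← Finset.sum_subtype_eq_sum_filter]
    exact sum_le_wsum (fun i : S => f i) _

theorem iSup_sum_range_eq_wsum (f : ℕ → U) :
    ⨆ n, ∑ k ∈ Finset.range n, f k = wsum f := by
  refine le_antisymm (iSup_le fun n => sum_le_wsum f _) (iSup_le fun J => ?_)
  obtain ⟨n, hn⟩ := J.exists_nat_subset_range
  exact (Finset.sum_le_sum_of_subset hn).trans (le_iSup (fun n => ∑ k ∈ Finset.range n, f k) n)

end wsum

section kext

variable {U : Type u} [OLSemiring U] {X Y Z : Type u}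

theorem kext_apply (f : X → Y → U) (m : X → U) (y : Y) :
    kext f m y = wsum (fun x => m x * f x y) :=
  wsum_subtype_of_support_subset (f := fun x => m x * f x y) (Function.support_mul_subset_left _ _)

theorem kext_eta_right (f : X → Y → U) (x : X) : kext f (eta x) = f x := by
  funext y
  rw [kext_apply, wsum_eq_single x fun x' hx' => by simp [eta, hx']]
  simp [eta]

theorem kext_eta_left (m : X → U) : kext eta m = m := by
  funext y
  rw [kext_apply, wsum_eq_single y fun x hx => by simp [eta, Ne.symm hx]]
  simp [eta]

theorem kext_kext (f : Y → Z → U) (g : X → Y → U) (m : X → U) :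
    kext f (kext g m) = kext (fun x => kext f (g x)) m := by
  funext z
  simp only [kext_apply, wsum_mul, mul_wsum, mul_assoc]
  exact wsum_comm _

theorem kext_finsetSum {K : Type*} (s : Finset K) (f : K → X → Y → U) (m : X → U) (y : Y) :
    kext (fun x y => ∑ k ∈ s, f k x y) m y = ∑ k ∈ s, kext (f k) m y := by
  simp only [kext_apply, Finset.mul_sum, finsetSum_wsum]

theorem mul_kext (f : X → Y → U) (m : X → U) (u : U) (y : Y) :
    u * kext f m y = kext f (fun x => u * m x) y := by
  simp only [kext_apply, mul_wsum, mul_assoc]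

end kext

theorem Phi_iterate_eq_sum {U : Type u} [OLSemiring U] {St : Type u} (w w' : St → U)
    (g : St → St → U) (P : ℕ → St → St → U)
    (hP_zero : ∀ σ τ, P 0 σ τ = w' σ * eta σ τ)
    (hP_succ : ∀ k σ τ, P (k + 1) σ τ = w σ * kext (P k) (g σ) τ) (n : ℕ) :
    (Phi w w' g)^[n] (fun _ _ => 0) = fun σ τ => ∑ k ∈ Finset.range n, P k σ τ := by
  induction n with
  | zero => simp
  | succ n ih =>
    funext σ τ
    rw [Function.iterate_succ_apply', ih, Phi, kext_finsetSum, Finset.mul_sum,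
      Finset.sum_range_succ', hP_zero]
    simp only [hP_succ]

section sem

variable {U : Type u} [OLSemiring U] {St TI Act : Type u} (tsem : TI → Set St)
  (asem : Act → St → St → U)

theorem sem_ppow_succ (D : Prog U St TI Act) (n : ℕ) (σ : St) :
    sem tsem asem (ppow D (n + 1)) σ = kext (sem tsem asem (ppow D n)) (sem tsem asem D σ) := by
  induction n generalizing σ with
  | zero => exact (kext_eta_right _ σ).trans (kext_eta_left _).symm
  | succ n ih =>
    show kext (sem tsem asem D) (sem tsem asem (ppow D (n + 1)) σ) = _
    rw [ih, kext_kext]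
    rfl

theorem sem_assume_seq (e : Expr U TI) (C : Prog U St TI Act) (σ : St) :
    sem tsem asem (.seq (.assume e) C) σ = fun τ => eeval tsem e σ * sem tsem asem C σ τ := by
  funext τ
  calc kext (sem tsem asem C) (fun τ' => eeval tsem e σ * eta σ τ') τ
      = eeval tsem e σ * kext (sem tsem asem C) (eta σ) τ := (mul_kext _ _ _ _).symm
    _ = _ := by rw [kext_eta_right]

end sem

section unroll

variable {U : Type u} [OLSemiring U] {St TI Act : Type u} (tsem : TI → Set St)
  (asem : Act → St → St → U) (C : Prog U St TI Act) (e e' : Expr U TI)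

theorem sem_unroll_zero (σ τ : St) :
    sem tsem asem (.seq (ppow (.seq (.assume e) C) 0) (.assume e')) σ τ
      = eeval tsem e' σ * eta σ τ := by
  show kext _ (eta σ) τ = _
  rw [kext_eta_right]
  rfl

theorem sem_unroll_succ (k : ℕ) (σ τ : St) :
    sem tsem asem (.seq (ppow (.seq (.assume e) C) (k + 1)) (.assume e')) σ τ
      = eeval tsem e σ * kext (sem tsem asem (.seq (ppow (.seq (.assume e) C) k) (.assume e')))
          (sem tsem asem C σ) τ := by
  show kext _ (sem tsem asem (ppow _ (k + 1)) σ) τ = _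
  rw [sem_ppow_succ, kext_kext, sem_assume_seq, ← mul_kext]
  rfl

end unroll

/-- **Unrolling of iteration**:
`⟦iter(C,e,e′)⟧(σ) = ∑_{n∈ℕ} ⟦(assume e; C)ⁿ ; assume e′⟧(σ)`, the infinite sum taken
pointwise in `W(Σ)`. -/
theorem iter_unroll {U St TI Act : Type u} [OLSemiring U]
    (tsem : TI → Set St) (asem : Act → St → St → U)
    (C : Prog U St TI Act) (e e' : Expr U TI) (σ : St) :
    sem tsem asem (.iter C e e') σ
      = fun τ => wsum (fun n : ℕ =>
          sem tsem asem (.seq (ppow (.seq (.assume e) C) n) (.assume e')) σ τ) := by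
  funext τ
  have partial_sums := Phi_iterate_eq_sum (eeval tsem e) (eeval tsem e') (sem tsem asem C)
    (fun n => sem tsem asem (.seq (ppow (.seq (.assume e) C) n) (.assume e')))
    (sem_unroll_zero tsem asem C e e') (sem_unroll_succ tsem asem C e e')
  rw [sem, iSup_apply, iSup_apply]
  simp only [partial_sums]
  exact iSup_sum_range_eq_wsum _
end

section
/- Subsumption of Lisbon Logic (nondeterministic instance): for every function f : Σ → Set Σ and all subsets P, Q ⊆ Σ, the Outcome Logic triple ⟨⌈P⌉⟩f⟨◇Q⟩ is valid — i.e. f†(S) ∈ ◇Q for every S ∈ ⌈P⌉ — if and only if P ⊆ { σ | f(σ) ∩ Q is nonempty } (the Dynamic Logic diamond semantics of the Lisbon triple ⟨P⟩ f ⟨Q⟩). -/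
/-!
`◇Q` holds of a union exactly when it holds of one of its pieces, so `f†(S) ∈ ◇Q` says that some
`σ ∈ S` has `f σ ∩ Q` nonempty. Every `S ∈ ⌈P⌉` contains a state of `P`, and conversely every
`σ ∈ P` gives the member `{σ}` of `⌈P⌉`, for which `f†({σ}) = f σ`.
-/

/-- Kleisli extension in the powerset (nondeterministic) instance: `f†(S) = ⋃_{σ∈S} f σ`. -/
def kextP {St : Type*} (f : St → Set St) (S : Set St) : Set St :=
  ⋃ σ ∈ S, f σ

/-- `⌈P⌉` : the outcome assertion `{S | S nonempty and S ⊆ P}`. -/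
def ceil {St : Type*} (P : Set St) : Set (Set St) :=
  { S | S.Nonempty ∧ S ⊆ P }

/-- `◻Q` : the outcome assertion `{S | S ⊆ Q}`. -/
def boxA {St : Type*} (Q : Set St) : Set (Set St) :=
  { S | S ⊆ Q }

/-- `◇Q` : the outcome assertion `{S | S ∩ Q nonempty}`. -/
def diaA {St : Type*} (Q : Set St) : Set (Set St) :=
  { S | (S ∩ Q).Nonempty }

/-- Semantic validity of an outcome triple in the powerset instance. -/
def validP {St : Type*} (φ : Set (Set St)) (f : St → Set St) (ψ : Set (Set St)) : Prop :=
  ∀ S ∈ φ, kextP f S ∈ ψ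

section

variable {St : Type*}

@[simp]
theorem kextP_singleton (f : St → Set St) (σ : St) : kextP f {σ} = f σ := by
  simp [kextP]

@[simp]
theorem singleton_mem_ceil {P : Set St} {σ : St} : {σ} ∈ ceil P ↔ σ ∈ P := by
  simp [ceil]

theorem kextP_mem_diaA_iff {f : St → Set St} {S Q : Set St} :
    kextP f S ∈ diaA Q ↔ ∃ σ ∈ S, (f σ ∩ Q).Nonempty := by
  simp only [kextP, diaA, Set.mem_ofPred_eq, Set.iUnion₂_inter, Set.nonempty_biUnion]

end

/-- **Subsumption of Lisbon Logic (nondeterministic instance)**: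
`⊨ ⟨⌈P⌉⟩f⟨◇Q⟩` iff `P ⊆ {σ | f σ ∩ Q nonempty}` (the Dynamic Logic diamond semantics). -/
theorem ol_subsumes_lisbon {St : Type*} (f : St → Set St) (P Q : Set St) :
    validP (ceil P) f (diaA Q) ↔ P ⊆ { σ | (f σ ∩ Q).Nonempty } := by
  constructor
  · intro h σ hσ
    have hσ' : kextP f {σ} ∈ diaA Q := h {σ} (singleton_mem_ceil.2 hσ)
    rwa [kextP_singleton] at hσ'
  · rintro h S ⟨⟨σ, hσS⟩, hSP⟩
    exact kextP_mem_diaA_iff.2 ⟨σ, hσS, h (hSP hσS)⟩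
end

section
/- Soundness of the Lisbon loop-variant rule (nondeterministic instance): let b ⊆ Σ, f : Σ → Set Σ, and let (P_n)_{n∈ℕ} be subsets of Σ with P₀ ⊆ bᶜ, P_{n+1} ⊆ b for all n, and such that for every n and every σ ∈ P_{n+1}, f(σ) ∩ P_n is nonempty. Then for every n and every nonempty S ⊆ P_n, (⋃_{σ∈S} wh(σ)) ∩ P₀ is nonempty, i.e. the triple ⟨∃n:ℕ. ⌈P_n⌉⟩ while b do f ⟨◇P₀⟩ is valid. -/
open scoped Classical

def PhiW {St : Type*} (b : Set St) (f : St → Set St) (g : St → Set St) : St → Set St :=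
  fun σ => if σ ∈ b then ⋃ τ ∈ f σ, g τ else {σ}

theorem PhiW_mono {St : Type*} (b : Set St) (f : St → Set St) : Monotone (PhiW b f) := by
  intro g g' h σ
  by_cases hb : σ ∈ b
  · simp only [PhiW, if_pos hb]
    exact Set.iUnion₂_mono fun τ _ => h τ
  · simp [PhiW, hb]

/-- The denotation of `while b do f`: the least fixed point (pointwise `⊆` order)
of `Φ(g)(σ) = ⋃_{τ∈f σ} g τ` if `σ ∈ b`, else `{σ}`. -/
noncomputable def whileSem {St : Type*} (b : Set St) (f : St → Set St) : St → Set St :=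
  OrderHom.lfp ⟨PhiW b f, PhiW_mono b f⟩

/-!
The variant `n` counts the loop iterations still needed: from a state in `P 0` the guard
fails and the loop returns that state, and from a state in `P (n + 1)` the guard holds, so the
outcomes of the loop include those of the loop restarted at any successor, one of which lies
in `P n`. Induction on `n` then yields an outcome in `P 0` from every state of every `P n`.
-/

section WhileSem

variable {St : Type*} (b : Set St) (f : St → Set St)

theorem whileSem_eq : whileSem b f = PhiW b f (whileSem b f) :=
  (OrderHom.map_lfp ⟨PhiW b f, PhiW_mono b f⟩).symm

theorem whileSem_of_notMem {σ : St} (hσ : σ ∉ b) : whileSem b f σ = {σ} := by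
  rw [whileSem_eq]
  exact if_neg hσ

theorem whileSem_subset_whileSem_of_mem {σ τ : St} (hσ : σ ∈ b) (hτ : τ ∈ f σ) :
    whileSem b f τ ⊆ whileSem b f σ := by
  conv_rhs => rw [whileSem_eq]
  rw [PhiW, if_pos hσ]
  exact Set.subset_biUnion_of_mem hτ

theorem whileSem_inter_nonempty_of_variant (P : ℕ → Set St) (h0 : P 0 ⊆ bᶜ)
    (hS : ∀ n, P (n + 1) ⊆ b) (hstep : ∀ n, ∀ σ ∈ P (n + 1), (f σ ∩ P n).Nonempty) :
    ∀ n, ∀ σ ∈ P n, (whileSem b f σ ∩ P 0).Nonempty := by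
  intro n
  induction n with
  | zero =>
    intro σ hσ
    rw [whileSem_of_notMem b f (h0 hσ)]
    exact ⟨σ, rfl, hσ⟩
  | succ n ih =>
    intro σ hσ
    obtain ⟨τ, hτf, hτP⟩ := hstep n σ hσ
    exact (ih τ hτP).mono
      (Set.inter_subset_inter_left _ (whileSem_subset_whileSem_of_mem b f (hS n hσ) hτf))

end WhileSem

/-- **Soundness of the Lisbon loop-variant rule**: given subsets `(P n)` of `Σ` with
`P 0 ⊆ bᶜ`, `P (n+1) ⊆ b`, and `f σ ∩ P n` nonempty for every `σ ∈ P (n+1)`, the triple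
`⟨∃n. ⌈P n⌉⟩ while b do f ⟨◇(P 0)⟩` is valid. -/
theorem lisbon_variant_rule_sound {St : Type*} (b : Set St) (f : St → Set St)
    (P : ℕ → Set St)
    (h0 : P 0 ⊆ bᶜ)
    (hS : ∀ n, P (n + 1) ⊆ b)
    (hstep : ∀ n, ∀ σ ∈ P (n + 1), (f σ ∩ P n).Nonempty) :
    ∀ n, ∀ S : Set St, S.Nonempty → S ⊆ P n →
      ((⋃ σ ∈ S, whileSem b f σ) ∩ P 0).Nonempty := by
  rintro n S ⟨σ, hσ⟩ hSP
  exact (whileSem_inter_nonempty_of_variant b f P h0 hS hstep n σ (hSP hσ)).mono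
    (Set.inter_subset_inter_left _ (Set.subset_biUnion_of_mem hσ))
end
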